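/- A bilateral finite form of Jacobi's triple product identity: Let $m, n \ge 0$ be integers and let $q, x$ be nonzero complex numbers such that $(q;q)_{m+n} \ne 0$ and all factors occurring in denominators below are nonzero. Then $\sum_{k=-m}^{n} \binom{m+n}{m+k}_q \frac{(1 - xq^{2k+1})\, x^{2k} q^{2k^2+k}}{(1/x;q)_{m-k} \, (xq;q)_{n+k+1}} = 1$, where q-shifted factorials with (possibly) negative integer index are defined by $(a;q)_{-N} = 1/\prod_{j=1}^{N}(1 - aq^{-j})$ for $N \ge 0$. -/

import Mathlib

/-!
Put `z = x q^(1-2m)`, `j = m + k` and `N = m + n`. Whatever the signs of the two indices, the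
bilateral factors `(1/x;q)_(m-k) (xq;q)_(n+k+1)` multiply, up to the monomial
`(-x)^(k-m) q^((m-k)(m-k-1)/2)`, to the window `(zq^j;q)_(N+1) = ∏_{s=k-m+1}^{n+k+1} (1 - xq^s)`.
The summand for `k` is then the `j`-th term of the unilateral identity
`∑_{j=0}^N (-1)^j [N,j]_q q^(j(3j-1)/2) z^j (1 - zq^(2j)) / (zq^j;q)_(N+1) = 1`,
which is proved by induction on `N`: the difference of the sums for `N + 1` and `N` telescopes in
`j` against an explicit certificate.
-/

set_option autoImplicit false

/-- The q-shifted factorial `(a;q)_n = ∏_{j=0}^{n-1} (1 - a q^j)`. -/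
noncomputable def qPoch (q a : ℂ) (n : ℕ) : ℂ := ∏ j ∈ Finset.range n, (1 - a * q ^ j)

/-- The q-binomial coefficient `(q;q)_n / ((q;q)_k (q;q)_{n-k})`. -/
noncomputable def qBinom (q : ℂ) (n k : ℕ) : ℂ := qPoch q q n / (qPoch q q k * qPoch q q (n - k))

/-- The q-shifted factorial with integer index: for `n ≥ 0` it is
`(a;q)_n = ∏_{j=0}^{n-1} (1 - a q^j)`, and `(a;q)_{-N} = 1 / ∏_{j=1}^{N} (1 - a q^{-j})`. -/
noncomputable def qPochZ (q a : ℂ) (n : ℤ) : ℂ :=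
  if 0 ≤ n then ∏ j ∈ Finset.range n.toNat, (1 - a * q ^ (j : ℤ))
  else (∏ j ∈ Finset.range (-n).toNat, (1 - a * q ^ (-(j : ℤ) - 1)))⁻¹

lemma qPoch_zero (q a : ℂ) : qPoch q a 0 = 1 := Finset.prod_range_zero _

lemma qPoch_succ (q a : ℂ) (n : ℕ) : qPoch q a (n + 1) = qPoch q a n * (1 - a * q ^ n) :=
  Finset.prod_range_succ _ n

lemma qPoch_succ' (q a : ℂ) (n : ℕ) : qPoch q a (n + 1) = (1 - a) * qPoch q (a * q) n := by
  rw [qPoch, qPoch, Finset.prod_range_succ', pow_zero, mul_one, mul_comm]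
  exact congrArg _ (Finset.prod_congr rfl fun i _ => by ring)

lemma qPoch_add (q a : ℂ) (s t : ℕ) :
    qPoch q a (s + t) = qPoch q a s * qPoch q (a * q ^ s) t := by
  simp only [qPoch, Finset.prod_range_add, pow_add, mul_assoc]

lemma qPoch_ne_zero_iff {q a : ℂ} {n : ℕ} : qPoch q a n ≠ 0 ↔ ∀ i < n, 1 - a * q ^ i ≠ 0 := by
  simp [qPoch, Finset.prod_ne_zero_iff]

lemma qPoch_ne_zero_of_le {q a : ℂ} {l n : ℕ} (hl : l ≤ n) (ha : qPoch q a n ≠ 0) :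
    qPoch q a l ≠ 0 :=
  qPoch_ne_zero_iff.2 fun i hi => qPoch_ne_zero_iff.1 ha i (by omega)

lemma qPoch_mul_pow_ne_zero {q a : ℂ} {j l n : ℕ} (hjl : j + l ≤ n) (ha : qPoch q a n ≠ 0) :
    qPoch q (a * q ^ j) l ≠ 0 := by
  rw [qPoch_ne_zero_iff] at ha ⊢
  intro i hi
  simpa [mul_assoc, ← pow_add] using ha (j + i) (by omega)

lemma pentagonal_natCast_succ (j : ℕ) :
    pentagonal ((j + 1 : ℕ) : ℤ) = pentagonal (j : ℤ) + 3 * j + 1 := by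
  have h₁ := two_mul_natCast_pentagonal ((j + 1 : ℕ) : ℤ)
  have h₀ := two_mul_natCast_pentagonal (j : ℤ)
  push_cast at h₁
  zify
  linarith

noncomputable def jacobiTerm (q z : ℂ) (N j : ℕ) : ℂ :=
  (-1) ^ j * qBinom q N j * q ^ pentagonal j * z ^ j * (1 - z * q ^ (2 * j)) /
    qPoch q (z * q ^ j) (N + 1)

/-- The factor `(1 - q ^ j) / (1 - q ^ (N + 1))` turns `[N+1, j]_q` into `[N, j-1]_q` and makes
the certificate vanish at `j = 0`. -/
noncomputable def jacobiCertificate (q z : ℂ) (N j : ℕ) : ℂ :=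
  (-1) ^ j * qBinom q (N + 1) j * (1 - q ^ j) / (1 - q ^ (N + 1)) * q ^ (N + 1 - j) *
    q ^ pentagonal j * z ^ j / qPoch q (z * q ^ j) (N + 1)

lemma jacobiTerm_succ {q z : ℂ} {N j : ℕ} (hj : j ≤ N) (hq : qPoch q q (N + 1) ≠ 0)
    (hz : qPoch q (z * q ^ j) (N + 2) ≠ 0) :
    jacobiTerm q z (N + 1) j =
      jacobiTerm q z N j + jacobiCertificate q z N j - jacobiCertificate q z N (j + 1) := by
  obtain ⟨e, rfl⟩ := Nat.exists_eq_add_of_le hj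
  have hqj := qPoch_ne_zero_iff.1 hq j (by omega)
  have hqe := qPoch_ne_zero_iff.1 hq e (by omega)
  have hqN := qPoch_ne_zero_iff.1 hq (j + e) (by omega)
  have hQj : qPoch q q j ≠ 0 := qPoch_ne_zero_of_le (by omega) hq
  have hQe : qPoch q q e ≠ 0 := qPoch_ne_zero_of_le (by omega) hq
  have hQN : qPoch q q (j + e) ≠ 0 := qPoch_ne_zero_of_le (by omega) hq
  set V := qPoch q (z * q ^ (j + 1)) (j + e) with hV
  have hzq : z * q ^ j * q = z * q ^ (j + 1) := by ring
  have hW₁ : qPoch q (z * q ^ j) (j + e + 1) = (1 - z * q ^ j) * V := by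
    rw [qPoch_succ', hzq]
  have hW₃ : qPoch q (z * q ^ (j + 1)) (j + e + 1) = V * (1 - z * q ^ (2 * j + e + 1)) := by
    rw [qPoch_succ, ← hV]; ring
  have hW₂ : qPoch q (z * q ^ j) (j + e + 1 + 1) =
      (1 - z * q ^ j) * V * (1 - z * q ^ (2 * j + e + 1)) := by
    rw [qPoch_succ', hzq, hW₃]; ring
  rw [hW₂] at hz
  have hz₀ : 1 - z * q ^ j ≠ 0 := left_ne_zero_of_mul (left_ne_zero_of_mul hz)
  have hV₀ : V ≠ 0 := right_ne_zero_of_mul (left_ne_zero_of_mul hz)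
  have hz₁ : 1 - z * q ^ (2 * j + e + 1) ≠ 0 := right_ne_zero_of_mul hz
  have hqN' : 1 - q ^ (j + e + 1) ≠ 0 := by rwa [pow_succ']
  simp only [jacobiTerm, jacobiCertificate, qBinom, hW₁, hW₂, hW₃, pentagonal_natCast_succ,
    show j + e + 1 - j = e + 1 by omega, show j + e - j = e by omega,
    show j + e + 1 - (j + 1) = e by omega, qPoch_succ q q j, qPoch_succ q q e,
    qPoch_succ q q (j + e)]
  field_simp
  ring

lemma jacobiCertificate_zero (q z : ℂ) (N : ℕ) : jacobiCertificate q z N 0 = 0 := by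
  simp [jacobiCertificate]

lemma jacobiTerm_self {q z : ℂ} {N : ℕ} (hq : qPoch q q (N + 1) ≠ 0)
    (hz : qPoch q (z * q ^ (N + 1)) (N + 2) ≠ 0) :
    jacobiTerm q z (N + 1) (N + 1) = jacobiCertificate q z N (N + 1) := by
  have hqN : 1 - q ^ (N + 1) ≠ 0 := by
    simpa [pow_succ'] using qPoch_ne_zero_iff.1 hq N (by omega)
  have hW₂ : qPoch q (z * q ^ (N + 1)) (N + 1 + 1) =
      qPoch q (z * q ^ (N + 1)) (N + 1) * (1 - z * q ^ (2 * (N + 1))) := by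
    rw [qPoch_succ]; ring
  rw [hW₂] at hz
  have hW := left_ne_zero_of_mul hz
  have hz₁ := right_ne_zero_of_mul hz
  simp only [jacobiTerm, jacobiCertificate, qBinom, Nat.sub_self, qPoch_zero, hW₂]
  field_simp

theorem sum_jacobiTerm {q z : ℂ} (N : ℕ) (hq : qPoch q q N ≠ 0) (hz : qPoch q z (2 * N + 1) ≠ 0) :
    ∑ j ∈ Finset.range (N + 1), jacobiTerm q z N j = 1 := by
  induction N with
  | zero =>
    have h₁ : 1 - z ≠ 0 := by simpa using qPoch_ne_zero_iff.1 hz 0 one_pos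
    simp [jacobiTerm, qBinom, qPoch, pentagonal_def, h₁]
  | succ N ih =>
    have hstep : ∀ j ∈ Finset.range (N + 1), jacobiTerm q z (N + 1) j =
        jacobiTerm q z N j + (jacobiCertificate q z N j - jacobiCertificate q z N (j + 1)) :=
      fun j hj => by
        have hjN := Finset.mem_range_succ_iff.1 hj
        rw [add_sub_assoc']
        exact jacobiTerm_succ hjN hq (qPoch_mul_pow_ne_zero (by omega) hz)
    rw [Finset.sum_range_succ, Finset.sum_congr rfl hstep, Finset.sum_add_distrib,
      Finset.sum_range_sub', ih (qPoch_ne_zero_of_le (by omega) hq)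
        (qPoch_ne_zero_of_le (by omega) hz), jacobiCertificate_zero,
      jacobiTerm_self hq (qPoch_mul_pow_ne_zero (by omega) hz)]
    ring

section zpow

variable {q : ℂ}

lemma zpow_mul_pow (hq : q ≠ 0) (n : ℤ) (K : ℕ) : q ^ n * q ^ K = q ^ (n + K) := by
  rw [zpow_add₀ hq, zpow_natCast]

lemma prod_range_zpow_eq_zpow_sum (hq : q ≠ 0) (s : ℕ → ℤ) (A : ℕ) :
    ∏ t ∈ Finset.range A, q ^ s t = q ^ ∑ t ∈ Finset.range A, s t := by
  induction A with
  | zero => simp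
  | succ A ih => rw [Finset.prod_range_succ, Finset.sum_range_succ, ih, zpow_add₀ hq]

end zpow

lemma two_mul_sum_range_intCast (A : ℕ) : 2 * ∑ t ∈ Finset.range A, (t : ℤ) = A * (A - 1) := by
  induction A with
  | zero => simp
  | succ A ih => rw [Finset.sum_range_succ, mul_add, ih]; push_cast; ring

lemma qPochZ_natCast_eq_prod (q a : ℂ) (n : ℕ) :
    qPochZ q a n = ∏ j ∈ Finset.range n, (1 - a * q ^ (j : ℤ)) := by
  rw [qPochZ, if_pos (Int.natCast_nonneg n), Int.toNat_natCast]

lemma qPochZ_natCast (q a : ℂ) (n : ℕ) : qPochZ q a n = qPoch q a n := by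
  simp only [qPochZ_natCast_eq_prod, qPoch, zpow_natCast]

lemma qPochZ_neg_natCast_eq_prod (q a : ℂ) (n : ℕ) :
    qPochZ q a (-n) = (∏ j ∈ Finset.range n, (1 - a * q ^ (-(j : ℤ) - 1)))⁻¹ := by
  rcases n.eq_zero_or_pos with rfl | hn
  · simp [qPochZ]
  · simp [qPochZ, hn.ne']

lemma qPochZ_neg_natCast {q : ℂ} (hq : q ≠ 0) (a : ℂ) (n : ℕ) :
    qPochZ q a (-n) = (qPoch q (a * q ^ (-(n : ℤ))) n)⁻¹ := by
  rw [qPochZ_neg_natCast_eq_prod, qPoch, ← Finset.prod_range_reflect]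
  refine congrArg _ (Finset.prod_congr rfl fun j hj => ?_)
  rw [mul_assoc, zpow_mul_pow hq]
  congr 3
  have := Finset.mem_range.1 hj
  omega

lemma qPochZ_add_natCast {q : ℂ} (hq : q ≠ 0) {a : ℂ} {n : ℤ} (h : qPochZ q a n ≠ 0) (K : ℕ) :
    qPochZ q a (n + K) = qPochZ q a n * qPoch q (a * q ^ n) K := by
  obtain ⟨A, rfl | rfl⟩ := Int.eq_nat_or_neg n
  · rw [← Nat.cast_add, qPochZ_natCast, qPochZ_natCast, qPoch_add, zpow_natCast]
  rw [qPochZ_neg_natCast hq, ne_eq, inv_eq_zero] at h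
  rw [qPochZ_neg_natCast hq]
  rcases le_or_gt A K with hAK | hKA
  · obtain ⟨B, rfl⟩ := Nat.exists_eq_add_of_le hAK
    rw [show -(A : ℤ) + (A + B : ℕ) = B by push_cast; ring, qPochZ_natCast, qPoch_add,
      mul_assoc, zpow_mul_pow hq, neg_add_cancel, zpow_zero, mul_one, inv_mul_cancel_left₀ h]
  · obtain ⟨B, rfl⟩ := Nat.exists_eq_add_of_le hKA.le
    have hsplit : qPoch q (a * q ^ (-((K + B : ℕ) : ℤ))) (K + B) =
        qPoch q (a * q ^ (-((K + B : ℕ) : ℤ))) K * qPoch q (a * q ^ (-(B : ℤ))) B := by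
      rw [qPoch_add, mul_assoc, zpow_mul_pow hq]
      congr 4
      push_cast
      ring
    rw [hsplit] at h
    rw [show -((K + B : ℕ) : ℤ) + K = -B by push_cast; ring, qPochZ_neg_natCast hq, hsplit,
      mul_inv, mul_right_comm, inv_mul_cancel₀ (left_ne_zero_of_mul h), one_mul]

section inversion

variable {q x : ℂ}

lemma one_sub_inv_mul_zpow (hq : q ≠ 0) (hx : x ≠ 0) (s : ℤ) :
    1 - x⁻¹ * q ^ s = (-x)⁻¹ * q ^ s * (1 - x * q * q ^ (-s - 1)) := by
  have hs : q * q ^ (-s - 1) = (q ^ s)⁻¹ := by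
    rw [← zpow_one_add₀ hq, ← zpow_neg]; ring_nf
  have : q ^ s ≠ 0 := zpow_ne_zero s hq
  rw [mul_assoc x, hs]
  field_simp
  ring

lemma prod_one_sub_inv_mul_zpow (hq : q ≠ 0) (hx : x ≠ 0) (s : ℕ → ℤ) (A : ℕ) :
    ∏ t ∈ Finset.range A, (1 - x⁻¹ * q ^ s t) =
      (-x) ^ (-(A : ℤ)) * q ^ (∑ t ∈ Finset.range A, s t) *
        ∏ t ∈ Finset.range A, (1 - x * q * q ^ (-s t - 1)) := by
  rw [Finset.prod_congr rfl fun t _ => one_sub_inv_mul_zpow hq hx (s t), Finset.prod_mul_distrib,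
    Finset.prod_mul_distrib, Finset.prod_const, Finset.card_range, prod_range_zpow_eq_zpow_sum hq,
    zpow_neg, zpow_natCast, inv_pow]

lemma qPochZ_inv (hq : q ≠ 0) (hx : x ≠ 0) (M : ℤ) :
    qPochZ q x⁻¹ M = (-x) ^ (-M) * q ^ (M * (M - 1) / 2) * (qPochZ q (x * q) (-M))⁻¹ := by
  obtain ⟨A, rfl | rfl⟩ := Int.eq_nat_or_neg M
  · have hsum := two_mul_sum_range_intCast A
    rw [qPochZ_natCast_eq_prod, qPochZ_neg_natCast_eq_prod, inv_inv,
      prod_one_sub_inv_mul_zpow hq hx (fun t => (t : ℤ))]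
    congr 3
    omega
  · have hsum := two_mul_sum_range_intCast A
    rw [qPochZ_neg_natCast_eq_prod, neg_neg, qPochZ_natCast_eq_prod,
      prod_one_sub_inv_mul_zpow hq hx (fun t => -(t : ℤ) - 1)]
    simp only [neg_sub, sub_neg_eq_add, add_sub_cancel_left, mul_inv, ← zpow_neg, neg_neg,
      Finset.sum_sub_distrib, Finset.sum_neg_distrib]
    congr 3
    have hA : -(A : ℤ) * (-A - 1) = A * (A - 1) + 2 * A := by ring
    simp only [Finset.sum_const, Finset.card_range, nsmul_eq_mul, mul_one]
    omega

end inversion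

lemma qPochZ_inv_mul_qPochZ_sub {q x : ℂ} (hq : q ≠ 0) (hx : x ≠ 0) (M : ℤ) (K : ℕ)
    (h : qPochZ q x⁻¹ M * qPochZ q (x * q) (K - M) ≠ 0) :
    qPochZ q x⁻¹ M * qPochZ q (x * q) (K - M) =
      (-x) ^ (-M) * q ^ (M * (M - 1) / 2) * qPoch q (x * q ^ (1 - M)) K := by
  have hM : qPochZ q (x * q) (-M) ≠ 0 := by
    have := left_ne_zero_of_mul h
    rw [qPochZ_inv hq hx M] at this
    simpa using right_ne_zero_of_mul this
  rw [qPochZ_inv hq hx, show (K : ℤ) - M = -M + K by ring, qPochZ_add_natCast hq hM,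
    mul_assoc x, ← zpow_one_add₀ hq, ← sub_eq_add_neg, mul_assoc _ _⁻¹, inv_mul_cancel_left₀ hM]

lemma bilateral_denominator_eq {q x : ℂ} (hq : q ≠ 0) (hx : x ≠ 0) {m n : ℕ} {k : ℤ}
    (hk : -(m : ℤ) ≤ k)
    (h : qPochZ q (1 / x) ((m : ℤ) - k) * qPochZ q (x * q) ((n : ℤ) + k + 1) ≠ 0) :
    qPochZ q (1 / x) ((m : ℤ) - k) * qPochZ q (x * q) ((n : ℤ) + k + 1) =
      (-x) ^ (-((m : ℤ) - k)) * q ^ (((m : ℤ) - k) * ((m : ℤ) - k - 1) / 2) *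
        qPoch q (x * q ^ (1 - 2 * (m : ℤ)) * q ^ ((m : ℤ) + k).toNat) (m + n + 1) := by
  have hK : (n : ℤ) + k + 1 = ((m + n + 1 : ℕ) : ℤ) - (m - k) := by push_cast; ring
  rw [one_div, hK] at h ⊢
  rw [qPochZ_inv_mul_qPochZ_sub hq hx _ _ h, mul_assoc x, zpow_mul_pow hq]
  congr 4
  omega

lemma bilateral_term_eq_jacobiTerm {q x : ℂ} (hq : q ≠ 0) (hx : x ≠ 0) {m n : ℕ} {k : ℤ}
    (hk : -(m : ℤ) ≤ k)
    (h : qPochZ q (1 / x) ((m : ℤ) - k) * qPochZ q (x * q) ((n : ℤ) + k + 1) ≠ 0) :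
    qBinom q (m + n) ((m : ℤ) + k).toNat *
        ((1 - x * q ^ (2 * k + 1)) * x ^ (2 * k) * q ^ (2 * k ^ 2 + k)) /
        (qPochZ q (1 / x) ((m : ℤ) - k) * qPochZ q (x * q) ((n : ℤ) + k + 1)) =
      jacobiTerm q (x * q ^ (1 - 2 * (m : ℤ))) (m + n) ((m : ℤ) + k).toNat := by
  have hD := bilateral_denominator_eq hq hx hk h
  rw [hD] at h ⊢
  set j := ((m : ℤ) + k).toNat with hj
  have hjk : (j : ℤ) = m + k := by omega
  have hbase : x * q ^ (2 * k + 1) = x * q ^ (1 - 2 * (m : ℤ)) * q ^ (2 * j) := by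
    rw [mul_assoc, zpow_mul_pow hq]
    congr 2
    push_cast
    omega
  have hsign : (-x) ^ (-((m : ℤ) - k)) * (-1) ^ j = x ^ (-((m : ℤ) - k)) := by
    rw [neg_eq_neg_one_mul x, mul_zpow, mul_right_comm, ← zpow_natCast (-1 : ℂ) j,
      ← zpow_add₀ (by norm_num), Even.neg_one_zpow ⟨k, by omega⟩, one_mul]
  have hmono : x ^ (2 * k) * q ^ (2 * k ^ 2 + k) =
      (-x) ^ (-((m : ℤ) - k)) * q ^ (((m : ℤ) - k) * ((m : ℤ) - k - 1) / 2) *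
        ((-1) ^ j * q ^ pentagonal j * (x * q ^ (1 - 2 * (m : ℤ))) ^ j) := by
    have htri := Int.two_mul_ediv_two_of_even (Int.even_mul_pred_self ((m : ℤ) - k))
    have hpent := two_mul_natCast_pentagonal (j : ℤ)
    rw [hjk] at hpent
    have hexp : ((m : ℤ) - k) * ((m : ℤ) - k - 1) / 2 + pentagonal (j : ℤ) +
        (1 - 2 * (m : ℤ)) * j = 2 * k ^ 2 + k := by
      rw [hjk]; linarith
    rw [mul_pow, ← zpow_natCast x, ← zpow_natCast (q ^ _), ← zpow_natCast q, ← zpow_mul]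
    calc x ^ (2 * k) * q ^ (2 * k ^ 2 + k)
        = x ^ (-((m : ℤ) - k) + j) * q ^ (((m : ℤ) - k) * ((m : ℤ) - k - 1) / 2 +
            pentagonal (j : ℤ) + (1 - 2 * (m : ℤ)) * j) := by
          rw [hexp]; congr 2; omega
      _ = _ := by
          rw [zpow_add₀ hx, zpow_add₀ hq, zpow_add₀ hq, ← hsign]
          ring
  have hc : (-x) ^ (-((m : ℤ) - k)) ≠ 0 := zpow_ne_zero _ (neg_ne_zero.2 hx)
  have hW := right_ne_zero_of_mul h
  rw [jacobiTerm, hbase, mul_assoc (1 - _), hmono]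
  field_simp

/-- A bilateral finite form of Jacobi's triple product identity. -/
theorem finite_jacobi_triple_product (m n : ℕ) (q x : ℂ) (hq : q ≠ 0) (hx : x ≠ 0)
    (hqq : qPoch q q (m + n) ≠ 0)
    (hden : ∀ k ∈ Finset.Icc (-(m : ℤ)) (n : ℤ),
      qPochZ q (1 / x) ((m : ℤ) - k) * qPochZ q (x * q) ((n : ℤ) + k + 1) ≠ 0) :
    ∑ k ∈ Finset.Icc (-(m : ℤ)) (n : ℤ),
      qBinom q (m + n) ((m : ℤ) + k).toNat *
        ((1 - x * q ^ (2 * k + 1)) * x ^ (2 * k) * q ^ (2 * k ^ 2 + k)) /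
        (qPochZ q (1 / x) ((m : ℤ) - k) * qPochZ q (x * q) ((n : ℤ) + k + 1))
    = 1 := by
  set z := x * q ^ (1 - 2 * (m : ℤ))
  have hwindow : ∀ k ∈ Finset.Icc (-(m : ℤ)) n,
      qPoch q (z * q ^ ((m : ℤ) + k).toNat) (m + n + 1) ≠ 0 := fun k hk => by
    have h := hden k hk
    rw [bilateral_denominator_eq hq hx (Finset.mem_Icc.1 hk).1 h] at h
    exact right_ne_zero_of_mul h
  have hz : qPoch q z (2 * (m + n) + 1) ≠ 0 := by
    have h₁ := hwindow (-m) (by simp)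
    have h₂ := hwindow n (by simp)
    simp only [add_neg_cancel, Int.toNat_zero, pow_zero, mul_one] at h₁
    rw [← Nat.cast_add, Int.toNat_natCast] at h₂
    rw [show 2 * (m + n) + 1 = (m + n) + (m + n + 1) by ring, qPoch_add]
    exact mul_ne_zero (qPoch_ne_zero_of_le (by omega) h₁) h₂
  refine (Finset.sum_nbij' (fun k => ((m : ℤ) + k).toNat) (fun j => (j : ℤ) - m) ?_ ?_ ?_ ?_
    fun k hk => bilateral_term_eq_jacobiTerm hq hx (Finset.mem_Icc.1 hk).1 (hden k hk)).trans
    (sum_jacobiTerm (m + n) hqq hz)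
  all_goals intro a ha; simp only [Finset.mem_Icc, Finset.mem_range] at ha ⊢; omega
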